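/- arXiv:1403.1825 — 4 statements merged into one kernel-verified Lean document; each statement's English description precedes it below -/
import Mathlib

section
/- Let m, n be natural numbers with m ≤ n and let x be a real number. Then (x)_n · ∑_{j=0}^{n} [((-n)_j / j!) · (-j)_m · (x+j)_m] = (-1)^m · (x)_{2m} · (-n)_m · (-m)_{n-m}. -/
/-!
Write `n = m + N` and `j = m + k`. The factor `(-j)_m` kills the terms with `j < m`, and for the
others `(-n)_j / j! · (-j)_m = (-1)^k · n^{(m)} · C(N, k)` (falling factorials `n^{(m)}`). The sum
is therefore `n^{(m)}` times, up to the sign `(-1)^N`, the `N`-th forward difference of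
`y ↦ (y)_m` at `y = x + m`. Since `Δ (y)_{m+1} = (m+1) (y+1)_m`, that difference is
`m^{(N)} (x+n)_{m-N}`: it vanishes when `N > m`, and otherwise `(x)_n (x+n)_{m-N} = (x)_{2m}`.
-/

/-- The Pochhammer symbol (rising factorial) `(x)_n = x(x+1)⋯(x+n-1)` for real `x`. -/
noncomputable def poch (x : ℝ) (n : ℕ) : ℝ := (ascPochhammer ℝ n).eval x

open Finset Polynomial fwdDiff

section CommRing

variable {R : Type*} [CommRing R]

theorem fwdDiff_eval_ascPochhammer_succ (m : ℕ) :
    Δ_[1] (fun y : R ↦ (ascPochhammer R (m + 1)).eval y) =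
      fun y ↦ (m + 1 : R) * (ascPochhammer R m).eval (y + 1) := by
  funext y
  rw [fwdDiff, ascPochhammer_succ_eval, ascPochhammer_succ_left, eval_mul, eval_X, eval_comp]
  simp only [eval_add, eval_X, eval_one]
  ring

theorem fwdDiff_iter_eval_ascPochhammer (N m : ℕ) (y : R) :
    (Δ_[1])^[N] (fun y : R ↦ (ascPochhammer R m).eval y) y =
      m.descFactorial N * (ascPochhammer R (m - N)).eval (y + N) := by
  induction N generalizing m y with
  | zero => simp
  | succ N ih =>
    rw [Function.iterate_succ_apply]
    rcases m with _ | m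
    · simp [Function.iterate_fixed (fwdDiff_const (1 : R) (0 : R))]
    · rw [fwdDiff_eval_ascPochhammer_succ]
      change (Δ_[1])^[N] ((m + 1 : R) • fun y ↦ (ascPochhammer R m).eval (y + 1)) y = _
      rw [fwdDiff_iter_const_smul, Pi.smul_apply,
        fwdDiff_iter_comp_add 1 (fun y ↦ (ascPochhammer R m).eval y), ih,
        Nat.succ_descFactorial_succ, Nat.succ_sub_succ, smul_eq_mul]
      push_cast
      rw [add_right_comm, add_assoc, mul_assoc]

theorem sum_range_neg_one_pow_mul_choose_mul_eval_ascPochhammer (N m : ℕ) (y : R) :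
    ∑ k ∈ range (N + 1), (-1) ^ k * N.choose k * (ascPochhammer R m).eval (y + k) =
      (-1) ^ N * m.descFactorial N * (ascPochhammer R (m - N)).eval (y + N) := by
  rw [mul_assoc, ← fwdDiff_iter_eval_ascPochhammer, fwdDiff_iter_eq_sum_shift, mul_sum]
  refine sum_congr rfl fun k hk ↦ ?_
  have hsign : (-1 : R) ^ N = (-1) ^ k * (-1) ^ (N - k) := by
    rw [← pow_add, Nat.add_sub_cancel' (mem_range_succ_iff.mp hk)]
  have hsq : ((-1 : R) ^ (N - k)) ^ 2 = 1 := by rw [← pow_mul, pow_mul', neg_one_sq, one_pow]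
  rw [hsign, zsmul_eq_mul, nsmul_eq_mul, mul_one]
  push_cast
  linear_combination -(-1 : R) ^ k * N.choose k * (ascPochhammer R m).eval (y + k) * hsq

end CommRing

theorem poch_neg_natCast (a k : ℕ) : poch (-a) k = (-1) ^ k * a.descFactorial k := by
  rw [poch, ascPochhammer_eval_neg_eq_descPochhammer, descPochhammer_eval_eq_descFactorial]

theorem poch_add (x : ℝ) (a b : ℕ) : poch x (a + b) = poch x a * poch (x + a) b := by
  simp [poch, ← ascPochhammer_mul, eval_comp]

theorem poch_neg_natCast_div_factorial_mul_poch_neg_natCast (n m k : ℕ) :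
    poch (-n) (m + k) / (m + k).factorial * poch (-(m + k : ℕ)) m =
      (-1) ^ k * n.descFactorial m * (n - m).choose k := by
  have hsplit := Nat.descFactorial_mul_descFactorial (n := n) (Nat.le_add_right m k)
  have hfact := Nat.factorial_mul_descFactorial (Nat.le_add_right m k)
  rw [Nat.add_sub_cancel_left, Nat.descFactorial_eq_factorial_mul_choose] at hsplit
  rw [Nat.add_sub_cancel_left] at hfact
  rw [poch_neg_natCast, poch_neg_natCast, ← hsplit, ← hfact]
  have : (k.factorial : ℝ) ≠ 0 := by positivity
  have hsq : ((-1 : ℝ) ^ m) ^ 2 = 1 := by rw [← pow_mul, pow_mul', neg_one_sq, one_pow]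
  push_cast
  field_simp
  linear_combination (-1 : ℝ) ^ k * n.descFactorial m * (n - m).choose k * hsq

theorem sum_range_poch_neg_div_factorial_mul_poch_neg_mul_poch (m N : ℕ) (x : ℝ) :
    ∑ j ∈ range (m + N + 1),
        poch (-(m + N : ℕ)) j / j.factorial * poch (-(j : ℝ)) m * poch (x + j) m =
      (m + N).descFactorial m * ((-1) ^ N * m.descFactorial N * poch (x + m + N) (m - N)) := by
  rw [show m + N + 1 = m + (N + 1) by ring, sum_range_add]
  have hlow : ∑ j ∈ range m,
      poch (-(m + N : ℕ)) j / j.factorial * poch (-(j : ℝ)) m * poch (x + j) m = 0 :=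
    sum_eq_zero fun j hj ↦ by
      have hzero : poch (-(j : ℝ)) m = 0 := ascPochhammer_eval_neg_coe_nat_of_lt (mem_range.mp hj)
      rw [hzero, mul_zero, zero_mul]
  calc _ = (m + N).descFactorial m *
        ∑ k ∈ range (N + 1), (-1) ^ k * N.choose k * poch (x + m + k) m := by
        rw [hlow, zero_add, mul_sum]
        refine sum_congr rfl fun k _ ↦ ?_
        rw [poch_neg_natCast_div_factorial_mul_poch_neg_natCast, Nat.add_sub_cancel_left]
        push_cast
        rw [← add_assoc x]
        ring
    _ = _ := congrArg _ (sum_range_neg_one_pow_mul_choose_mul_eval_ascPochhammer N m (x + m))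

theorem stmt_0 (m n : ℕ) (hmn : m ≤ n) (x : ℝ) :
    poch x n *
      ∑ j ∈ Finset.range (n + 1),
        (poch (-(n : ℝ)) j / (Nat.factorial j : ℝ)) * poch (-(j : ℝ)) m * poch (x + j) m =
    (-1 : ℝ) ^ m * poch x (2 * m) * poch (-(n : ℝ)) m * poch (-(m : ℝ)) (n - m) := by
  obtain ⟨N, rfl⟩ := Nat.exists_eq_add_of_le hmn
  rw [sum_range_poch_neg_div_factorial_mul_poch_neg_mul_poch, poch_neg_natCast, poch_neg_natCast,
    Nat.add_sub_cancel_left]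
  rcases le_or_gt N m with hNm | hmN
  · have hsign : (-1 : ℝ) ^ (m * 2) = 1 := Even.neg_one_pow ⟨m, by ring⟩
    rw [show 2 * m = (m + N) + (m - N) by omega, poch_add x (m + N)]
    push_cast
    rw [add_assoc x]
    ring_nf
    rw [hsign, mul_one]
  · simp [Nat.descFactorial_eq_zero_iff_lt.mpr hmN]
end

section
/- Let ρ be the complex matrix indexed by (Fin 2 × Fin 2) × (Fin 2 × Fin 2) with diagonal entries 1/6, 1/3, 1/3, 1/6 (in the order (0,0),(0,1),(1,0),(1,1)), with entries ρ((0,0),(1,1)) = ρ((1,1),(0,0)) = -1/6, and all other entries zero. Then ρ is a two-qubit density matrix, det ρ = 0, and det(ρ^PT) = 1/432, so that det(ρ^PT) - det ρ = 1/432. -/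
open Matrix ComplexOrder

/-- The partial transpose of a two-qubit matrix: `ρ^PT((a,b),(c,d)) = ρ((a,d),(c,b))`. -/
def partialTranspose (ρ : Matrix (Fin 2 × Fin 2) (Fin 2 × Fin 2) ℂ) :
    Matrix (Fin 2 × Fin 2) (Fin 2 × Fin 2) ℂ :=
  fun p q => ρ (p.1, q.2) (q.1, p.2)

/-- A two-qubit density matrix: Hermitian positive semidefinite with trace one. -/
def IsTwoQubitDensityMatrix (ρ : Matrix (Fin 2 × Fin 2) (Fin 2 × Fin 2) ℂ) : Prop :=
  ρ.PosSemidef ∧ ρ.trace = 1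

/-- The matrix with diagonal `1/6, 1/3, 1/3, 1/6`, corner entries
`((0,0),(1,1))` and `((1,1),(0,0))` equal to `-1/6`, and zeros elsewhere. -/
noncomputable def ρ₉ : Matrix (Fin 2 × Fin 2) (Fin 2 × Fin 2) ℂ :=
  fun p q =>
    if p = q then (if p = (0, 0) ∨ p = (1, 1) then 1 / 6 else 1 / 3)
    else if (p = (0, 0) ∧ q = (1, 1)) ∨ (p = (1, 1) ∧ q = (0, 0)) then -1 / 6
    else 0

/-!
Both `ρ₉` and its partial transpose only couple basis states `|ab⟩` of equal parity `a + b`, so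
each is block diagonal with blocks spanned by `|00⟩, |11⟩` and `|01⟩, |10⟩`, and its determinant is
the product of two `2 × 2` determinants. For `ρ₉` the first block `(1/6) [[1, -1], [-1, 1]]` is
singular; for `ρ₉^PT` the blocks are `(1/6) I` and `[[1/3, -1/6], [-1/6, 1/3]]`, with determinants
`1/36` and `1/12`. Positivity holds because the quadratic form of `ρ₉` is the sum of squares
`|x₀₀ - x₁₁|² / 6 + |x₀₁|² / 3 + |x₁₀|² / 3`.
-/

def IsParityBlockDiagonal {R : Type*} [Zero R] (M : Matrix (Fin 2 × Fin 2) (Fin 2 × Fin 2) R) :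
    Prop :=
  ∀ p q, p.1 + p.2 ≠ q.1 + q.2 → M p q = 0

theorem IsParityBlockDiagonal.det_eq {R : Type*} [CommRing R]
    {M : Matrix (Fin 2 × Fin 2) (Fin 2 × Fin 2) R} (hM : IsParityBlockDiagonal M) :
    M.det = (M (0, 0) (0, 0) * M (1, 1) (1, 1) - M (0, 0) (1, 1) * M (1, 1) (0, 0)) *
      (M (0, 1) (0, 1) * M (1, 0) (1, 0) - M (0, 1) (1, 0) * M (1, 0) (0, 1)) := by
  unfold IsParityBlockDiagonal at hM
  rw [← det_submatrix_equiv_self finProdFinEquiv.symm]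
  simp (disch := decide) [det_succ_row_zero, Fin.sum_univ_succ, finProdFinEquiv, Fin.divNat,
    Fin.modNat, Fin.succAbove, hM]
  ring

theorem IsParityBlockDiagonal.partialTranspose {M : Matrix (Fin 2 × Fin 2) (Fin 2 × Fin 2) ℂ}
    (hM : IsParityBlockDiagonal M) : IsParityBlockDiagonal (partialTranspose M) := by
  have parity : ∀ p q : Fin 2 × Fin 2, p.1 + p.2 ≠ q.1 + q.2 → p.1 + q.2 ≠ q.1 + p.2 := by
    decide
  exact fun p q h => hM _ _ (parity p q h)

lemma isParityBlockDiagonal_ρ₉ : IsParityBlockDiagonal ρ₉ := by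
  intro p q h
  fin_cases p <;> fin_cases q <;> simp_all [ρ₉]

lemma det_ρ₉ : ρ₉.det = 0 := by
  rw [isParityBlockDiagonal_ρ₉.det_eq]
  norm_num [ρ₉]

lemma det_partialTranspose_ρ₉ : (partialTranspose ρ₉).det = 1 / 432 := by
  rw [isParityBlockDiagonal_ρ₉.partialTranspose.det_eq]
  norm_num [partialTranspose, ρ₉]

lemma star_dotProduct_ρ₉_mulVec (x : Fin 2 × Fin 2 → ℂ) :
    star x ⬝ᵥ ρ₉ *ᵥ x = 1 / 6 * (star (x (0, 0) - x (1, 1)) * (x (0, 0) - x (1, 1))) +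
      1 / 3 * (star (x (0, 1)) * x (0, 1)) + 1 / 3 * (star (x (1, 0)) * x (1, 0)) := by
  simp only [dotProduct, Pi.star_apply, RCLike.star_def, mulVec, ρ₉, Fin.isValue, one_div, ite_mul,
    zero_mul, Fintype.sum_prod_type, Prod.mk.injEq, Fin.sum_univ_two, zero_ne_one, and_false,
    and_true, false_or, one_ne_zero, or_false, ↓reduceIte, add_zero, zero_add, star_sub]
  ring

lemma posSemidef_ρ₉ : ρ₉.PosSemidef := by
  have hermitian : ρ₉.IsHermitian := by
    ext p q
    fin_cases p <;> fin_cases q <;> simp [ρ₉, conjTranspose_apply]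
  refine .of_dotProduct_mulVec_nonneg hermitian fun x => ?_
  rw [star_dotProduct_ρ₉_mulVec]
  have h6 : (0 : ℂ) ≤ 1 / 6 := by norm_num [Complex.le_def]
  have h3 : (0 : ℂ) ≤ 1 / 3 := by norm_num [Complex.le_def]
  have := star_mul_self_nonneg (x (0, 0) - x (1, 1))
  have := star_mul_self_nonneg (x (0, 1))
  have := star_mul_self_nonneg (x (1, 0))
  positivity

lemma trace_ρ₉ : ρ₉.trace = 1 := by
  norm_num [trace, Fintype.sum_prod_type, ρ₉]

theorem stmt_9 :
    IsTwoQubitDensityMatrix ρ₉ ∧ ρ₉.det = 0 ∧ (partialTranspose ρ₉).det = 1 / 432 ∧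
      (partialTranspose ρ₉).det - ρ₉.det = 1 / 432 := by
  refine ⟨⟨posSemidef_ρ₉, trace_ρ₉⟩, det_ρ₉, det_partialTranspose_ρ₉, ?_⟩
  rw [det_ρ₉, det_partialTranspose_ρ₉, sub_zero]
end

section
/- For every two-qubit density matrix ρ, the determinant of its partial transpose satisfies -1/16 ≤ det(ρ^PT) ≤ 1/256 (where det(ρ^PT) is real, ρ^PT being Hermitian). -/
open Matrix ComplexOrder

/-!
Write `σ = ρ^PT`: it is Hermitian, its eigenvalues `λᵢ` sum to `tr ρ = 1`, and
`det σ = ∏ λᵢ`. Read a vector `x` of `ℂ² ⊗ ℂ²` as a `2 × 2` matrix `X`. Decomposing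
`ρ = ∑ₖ yₖ yₖ*`, the form `x* (yₖ yₖ*)^PT x` equals `tr (C C̄)` with `C = Xᴴ Yₖ`, whose real
part is at least `-2 |det C| ≥ -|det X| ‖yₖ‖²`; hence `Re (x* σ x) ≥ -|det X|`. As
`2 |det X| ≤ ‖x‖²`, every `λᵢ ≥ -1/2`. The span of two eigenvectors contains a nonzero `x`
with `det X = 0` (a product vector), on which the form of `σ` is nonnegative, so at most one
`λᵢ` is negative. If none is, AM-GM gives `∏ λᵢ ≤ 1/256`; if `λ < 0`, the other three have
product at most `((1 - λ)/3)³`, and `λ ((1 - λ)/3)³ ≥ -1/16` on `[-1/2, 0]`.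
-/

open Finset

theorem Real.prod_le_arith_mean_pow_card {ι : Type*} (s : Finset ι) (z : ι → ℝ)
    (hz : ∀ i ∈ s, 0 ≤ z i) :
    ∏ i ∈ s, z i ≤ ((∑ i ∈ s, z i) / #s) ^ #s := by
  rcases s.eq_empty_or_nonempty with rfl | hs
  · simp
  have hn : (0 : ℝ) < #s := by exact_mod_cast hs.card_pos
  have hamgm := Real.geom_mean_le_arith_mean_weighted s (fun _ => (#s : ℝ)⁻¹) z
    (fun _ _ => by positivity) (by simp [hn.ne']) hz
  calc ∏ i ∈ s, z i = (∏ i ∈ s, z i ^ (#s : ℝ)⁻¹) ^ #s := by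
        rw [← Finset.prod_pow]
        exact Finset.prod_congr rfl fun i hi =>
          (Real.rpow_inv_natCast_pow (hz i hi) hs.card_pos.ne').symm
    _ ≤ (∑ i ∈ s, (#s : ℝ)⁻¹ * z i) ^ #s := by
        gcongr
        exact Finset.prod_nonneg fun i hi => Real.rpow_nonneg (hz i hi) _
    _ = ((∑ i ∈ s, z i) / #s) ^ #s := by rw [← Finset.mul_sum, inv_mul_eq_div]

theorem prod_mem_Icc_of_card_eq_four {ι : Type*} [Fintype ι] [DecidableEq ι]
    (hι : Fintype.card ι = 4) (μ : ι → ℝ)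
    (hsum : ∑ i, μ i = 1) (hlow : ∀ i, -1 / 2 ≤ μ i)
    (hpair : ∀ i j, i ≠ j → 0 ≤ μ i ∨ 0 ≤ μ j) :
    ∏ i, μ i ∈ Set.Icc (-1 / 16) (1 / 256) := by
  by_cases! hneg : ∃ i, μ i < 0
  · obtain ⟨i, hi⟩ := hneg
    have hrest : ∀ j ∈ univ.erase i, 0 ≤ μ j := fun j hj =>
      (hpair i j (Finset.ne_of_mem_erase hj).symm).resolve_left hi.not_ge
    have hP0 : 0 ≤ ∏ j ∈ univ.erase i, μ j := Finset.prod_nonneg hrest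
    have hP : ∏ j ∈ univ.erase i, μ j ≤ ((1 - μ i) / 3) ^ 3 := by
      have := Real.prod_le_arith_mean_pow_card _ _ hrest
      rwa [Finset.sum_erase_eq_sub (mem_univ i), hsum, card_erase_of_mem (mem_univ i),
        card_univ, hι] at this
    -- `432 (μ ((1 - μ)/3)³ + 1/16) = (2μ + 1)(27 - 38μ + 28μ² - 8μ³)`
    have hcube : -1 / 16 ≤ μ i * ((1 - μ i) / 3) ^ 3 := by
      have h1 : 0 ≤ 2 * μ i + 1 := by linarith [hlow i]
      have h2 : 0 ≤ 27 - 38 * μ i + 28 * μ i ^ 2 - 8 * μ i ^ 3 := by nlinarith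
      nlinarith [mul_nonneg h1 h2]
    rw [← Finset.mul_prod_erase univ μ (mem_univ i)]
    exact ⟨hcube.trans (mul_le_mul_of_nonpos_left hP hi.le),
      (mul_nonpos_of_nonpos_of_nonneg hi.le hP0).trans (by norm_num)⟩
  · have := Real.prod_le_arith_mean_pow_card univ μ fun i _ => hneg i
    rw [hsum, card_univ, hι] at this
    constructor
    · linarith [Finset.prod_nonneg fun i (_ : i ∈ univ) => hneg i]
    · linarith

theorem two_mul_norm_det_fin_two_le (Y : Matrix (Fin 2) (Fin 2) ℂ) :
    2 * ‖Y.det‖ ≤ ∑ i, ∑ j, ‖Y i j‖ ^ 2 := by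
  have htri : ‖Y.det‖ ≤ ‖Y 0 0‖ * ‖Y 1 1‖ + ‖Y 0 1‖ * ‖Y 1 0‖ := by
    rw [det_fin_two, ← norm_mul, ← norm_mul]
    exact norm_sub_le _ _
  simp only [Fin.sum_univ_two]
  nlinarith [two_mul_le_add_sq ‖Y 0 0‖ ‖Y 1 1‖, two_mul_le_add_sq ‖Y 0 1‖ ‖Y 1 0‖]

theorem neg_two_mul_norm_det_le_re_sum_mul_star (C : Matrix (Fin 2) (Fin 2) ℂ) :
    -(2 * ‖C.det‖) ≤ (∑ b, ∑ d, C b d * star (C d b)).re := by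
  have hexpand : (∑ b, ∑ d, C b d * star (C d b)).re
      = ‖C 0 0‖ ^ 2 + ‖C 1 1‖ ^ 2 + 2 * (C 0 1 * star (C 1 0)).re := by
    have hswap : C 1 0 * star (C 0 1) = star (C 0 1 * star (C 1 0)) := by simp [mul_comm]
    simp only [Fin.sum_univ_two]
    rw [hswap]
    simp only [Complex.star_def, Complex.mul_conj', Complex.add_re, Complex.conj_re]
    norm_cast
    ring
  have hcross : -(‖C 0 1‖ * ‖C 1 0‖) ≤ (C 0 1 * star (C 1 0)).re := by
    have := Complex.abs_re_le_norm (C 0 1 * star (C 1 0))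
    rw [norm_mul, norm_star] at this
    linarith [neg_abs_le (C 0 1 * star (C 1 0)).re]
  have hoff : ‖C 0 1‖ * ‖C 1 0‖ ≤ ‖C 0 0‖ * ‖C 1 1‖ + ‖C.det‖ := by
    rw [det_fin_two, ← norm_mul, ← norm_mul]
    simpa using norm_sub_le (C 0 0 * C 1 1) (C 0 0 * C 1 1 - C 0 1 * C 1 0)
  nlinarith [sq_nonneg (‖C 0 0‖ - ‖C 1 1‖)]

def reshape {m n R : Type*} (x : m × n → R) : Matrix m n R :=
  of (Function.curry x)

theorem partialTranspose_sum {ι : Type*} (s : Finset ι)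
    (A : ι → Matrix (Fin 2 × Fin 2) (Fin 2 × Fin 2) ℂ) :
    partialTranspose (∑ k ∈ s, A k) = ∑ k ∈ s, partialTranspose (A k) := by
  ext p q
  simp only [partialTranspose, Matrix.sum_apply]

theorem Matrix.IsHermitian.partialTranspose {ρ : Matrix (Fin 2 × Fin 2) (Fin 2 × Fin 2) ℂ}
    (hρ : ρ.IsHermitian) : (_root_.partialTranspose ρ).IsHermitian := by
  ext p q
  exact congrFun (congrFun hρ (p.1, q.2)) (q.1, p.2)

theorem trace_partialTranspose (ρ : Matrix (Fin 2 × Fin 2) (Fin 2 × Fin 2) ℂ) :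
    (partialTranspose ρ).trace = ρ.trace :=
  rfl

theorem star_dotProduct_partialTranspose_vecMulVec_mulVec (x y : Fin 2 × Fin 2 → ℂ) :
    star x ⬝ᵥ (partialTranspose (vecMulVec y (star y)) *ᵥ x) =
      ∑ b, ∑ d, ((reshape x)ᴴ * reshape y) b d * star (((reshape x)ᴴ * reshape y) d b) := by
  simp only [dotProduct, mulVec, partialTranspose, vecMulVec_apply, mul_apply,
    conjTranspose_apply, reshape, of_apply, Function.curry_apply, Fintype.sum_prod_type,
    Fin.sum_univ_two, Pi.star_apply, star_add, star_mul', star_star]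
  ring

theorem neg_two_mul_norm_det_mul_le_re_partialTranspose_vecMulVec (x y : Fin 2 × Fin 2 → ℂ) :
    -(2 * ‖(reshape x).det‖ * ‖(reshape y).det‖) ≤
      (star x ⬝ᵥ (partialTranspose (vecMulVec y (star y)) *ᵥ x)).re := by
  have h := neg_two_mul_norm_det_le_re_sum_mul_star ((reshape x)ᴴ * reshape y)
  rwa [det_mul, det_conjTranspose, norm_mul, norm_star, ← mul_assoc,
    ← star_dotProduct_partialTranspose_vecMulVec_mulVec] at h

theorem Matrix.PosSemidef.neg_norm_det_mul_re_trace_le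
    {ρ : Matrix (Fin 2 × Fin 2) (Fin 2 × Fin 2) ℂ} (hρ : ρ.PosSemidef) (x : Fin 2 × Fin 2 → ℂ) :
    -(‖(reshape x).det‖ * ρ.trace.re) ≤ (star x ⬝ᵥ (partialTranspose ρ *ᵥ x)).re := by
  obtain ⟨m, y, rfl⟩ := posSemidef_iff_eq_sum_vecMulVec.mp hρ
  have hterm : ∀ k, -(‖(reshape x).det‖ * (vecMulVec (y k) (star (y k))).trace.re) ≤
      (star x ⬝ᵥ (partialTranspose (vecMulVec (y k) (star (y k))) *ᵥ x)).re := by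
    intro k
    have htrace : (vecMulVec (y k) (star (y k))).trace.re =
        ∑ i, ∑ j, ‖reshape (y k) i j‖ ^ 2 := by
      simp [trace_vecMulVec, dotProduct, Complex.mul_conj', ← Complex.ofReal_pow,
        Fintype.sum_prod_type, reshape]
    rw [htrace]
    have hdet := two_mul_norm_det_fin_two_le (reshape (y k))
    have := neg_two_mul_norm_det_mul_le_re_partialTranspose_vecMulVec x (y k)
    nlinarith [norm_nonneg (reshape x).det]
  simpa [partialTranspose_sum, sum_mulVec, dotProduct_sum, trace_sum, Finset.mul_sum]
    using Finset.sum_le_sum fun k (_ : k ∈ univ) => hterm k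

theorem exists_det_smul_add_smul_eq_zero (A B : Matrix (Fin 2) (Fin 2) ℂ) :
    ∃ s t : ℂ, (s ≠ 0 ∨ t ≠ 0) ∧ (s • A + t • B).det = 0 := by
  by_cases hA : A.det = 0
  · exact ⟨1, 0, Or.inl one_ne_zero, by simpa using hA⟩
  obtain ⟨s, hs⟩ := exists_quadratic_eq_zero hA
    (IsAlgClosed.exists_eq_mul_self
      (discrim A.det (A 0 0 * B 1 1 + B 0 0 * A 1 1 - A 0 1 * B 1 0 - B 0 1 * A 1 0) B.det))
  refine ⟨s, 1, Or.inr one_ne_zero, ?_⟩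
  simp only [det_fin_two, Matrix.add_apply, Matrix.smul_apply, smul_eq_mul, one_smul] at hs ⊢
  linear_combination hs

theorem Matrix.IsHermitian.star_dotProduct_mulVec_eigenvectorUnitary_mulVec
    {𝕜 n : Type*} [RCLike 𝕜] [Fintype n] [DecidableEq n] {A : Matrix n n 𝕜}
    (hA : A.IsHermitian) (z : n → 𝕜) :
    star (hA.eigenvectorUnitary *ᵥ z) ⬝ᵥ (A *ᵥ (hA.eigenvectorUnitary *ᵥ z)) =
      ∑ k, (hA.eigenvalues k : 𝕜) * (star (z k) * z k) := by
  set U : Matrix n n 𝕜 := (hA.eigenvectorUnitary : Matrix n n 𝕜)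
  have hdiag : star U * A * U = diagonal (RCLike.ofReal ∘ hA.eigenvalues) := by
    simpa [Unitary.conjStarAlgAut_apply] using hA.conjStarAlgAut_star_eigenvectorUnitary
  rw [star_mulVec, ← dotProduct_mulVec, mulVec_mulVec, mulVec_mulVec, ← star_eq_conjTranspose,
    hdiag]
  simp only [dotProduct, mulVec_diagonal, Function.comp_apply, Pi.star_apply]
  exact Finset.sum_congr rfl fun k _ => by ring

namespace IsTwoQubitDensityMatrix

variable {ρ : Matrix (Fin 2 × Fin 2) (Fin 2 × Fin 2) ℂ} (hρ : IsTwoQubitDensityMatrix ρ)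
include hρ

theorem neg_norm_det_reshape_le (x : Fin 2 × Fin 2 → ℂ) :
    -‖(reshape x).det‖ ≤ (star x ⬝ᵥ (partialTranspose ρ *ᵥ x)).re := by
  simpa [hρ.2] using hρ.1.neg_norm_det_mul_re_trace_le x

theorem neg_half_le_eigenvalues (hσ : (partialTranspose ρ).IsHermitian) (i : Fin 2 × Fin 2) :
    -1 / 2 ≤ hσ.eigenvalues i := by
  set v : Fin 2 × Fin 2 → ℂ := ⇑(hσ.eigenvectorBasis i)
  have hv : ∑ i, ∑ j, ‖reshape v i j‖ ^ 2 = 1 := by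
    have := EuclideanSpace.norm_sq_eq (hσ.eigenvectorBasis i)
    rw [hσ.eigenvectorBasis.norm_eq_one, one_pow] at this
    simpa [v, reshape, Fintype.sum_prod_type] using this.symm
  have hdet := two_mul_norm_det_fin_two_le (reshape v)
  have hform := hρ.neg_norm_det_reshape_le v
  rw [hσ.eigenvalues_eq i]
  simp only [RCLike.re_to_complex]
  linarith

theorem eigenvalues_nonneg_or_nonneg (hσ : (partialTranspose ρ).IsHermitian)
    {i j : Fin 2 × Fin 2} (hij : i ≠ j) : 0 ≤ hσ.eigenvalues i ∨ 0 ≤ hσ.eigenvalues j := by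
  by_contra! ⟨hi, hj⟩
  set U : Matrix (Fin 2 × Fin 2) (Fin 2 × Fin 2) ℂ := ↑hσ.eigenvectorUnitary
  -- `U *ᵥ z` below is a product vector in the span of the two eigenvectors
  obtain ⟨s, t, hst, hdet⟩ := exists_det_smul_add_smul_eq_zero
    (reshape (U *ᵥ Pi.single i 1)) (reshape (U *ᵥ Pi.single j 1))
  set z : Fin 2 × Fin 2 → ℂ := s • Pi.single i 1 + t • Pi.single j 1
  have hreshape : reshape (U *ᵥ z) =
      s • reshape (U *ᵥ Pi.single i 1) + t • reshape (U *ᵥ Pi.single j 1) := by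
    rw [mulVec_add, mulVec_smul, mulVec_smul]
    rfl
  have hform : (star (U *ᵥ z) ⬝ᵥ (partialTranspose ρ *ᵥ (U *ᵥ z))).re =
      hσ.eigenvalues i * ‖s‖ ^ 2 + hσ.eigenvalues j * ‖t‖ ^ 2 := by
    rw [hσ.star_dotProduct_mulVec_eigenvectorUnitary_mulVec,
      Fintype.sum_eq_add i j hij fun k hk => by simp [z, hk.1, hk.2]]
    simp [z, hij, hij.symm, Complex.conj_mul', ← Complex.ofReal_pow]
  have hpos := hρ.neg_norm_det_reshape_le (U *ᵥ z)
  rw [hreshape, hdet, norm_zero, neg_zero, hform] at hpos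
  have hs2 := mul_nonpos_of_nonpos_of_nonneg hi.le (sq_nonneg ‖s‖)
  have ht2 := mul_nonpos_of_nonpos_of_nonneg hj.le (sq_nonneg ‖t‖)
  rcases hst with hs | ht
  · linarith [mul_neg_of_neg_of_pos hi (pow_pos (norm_pos_iff.2 hs) 2)]
  · linarith [mul_neg_of_neg_of_pos hj (pow_pos (norm_pos_iff.2 ht) 2)]

end IsTwoQubitDensityMatrix

theorem stmt_13 (ρ : Matrix (Fin 2 × Fin 2) (Fin 2 × Fin 2) ℂ)
    (hρ : IsTwoQubitDensityMatrix ρ) :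
    (-1 / 16 : ℂ) ≤ (partialTranspose ρ).det ∧ (partialTranspose ρ).det ≤ 1 / 256 := by
  have hσ := hρ.1.isHermitian.partialTranspose
  have hsum : ∑ i, hσ.eigenvalues i = 1 := by
    have := hσ.trace_eq_sum_eigenvalues
    rw [trace_partialTranspose, hρ.2] at this
    simpa using (congrArg Complex.re this).symm
  obtain ⟨hlow, hhigh⟩ := prod_mem_Icc_of_card_eq_four rfl hσ.eigenvalues hsum
    (hρ.neg_half_le_eigenvalues hσ) fun i j hij => hρ.eigenvalues_nonneg_or_nonneg hσ hij
  rw [hσ.det_eq_prod_eigenvalues, ← RCLike.ofReal_prod]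
  exact ⟨by simpa using Complex.real_le_real.2 hlow, by simpa using Complex.real_le_real.2 hhigh⟩
end

section
/- For every two-qubit density matrix ρ, the Hermitian matrix ρ^PT has at most one negative eigenvalue; that is, counting with multiplicity, at most one of the four real eigenvalues of ρ^PT is strictly negative. -/
open Matrix ComplexOrder

/-! Suppose two eigenvalues of `ρ^PT` were negative, with orthonormal eigenvectors `u` and `w`.
Reshaping vectors of `ℂ² ⊗ ℂ²` into `2 × 2` matrices, `det (α u + β w)` is a binary quadratic
form in `(α, β)`, so over `ℂ` it has a nontrivial zero: the plane spanned by `u` and `w` contains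
a nonzero product vector `a ⊗ b`. On that plane the form `⟨v, ρ^PT v⟩` is negative definite, but
`⟨a ⊗ b, ρ^PT (a ⊗ b)⟩ = ⟨a ⊗ b̄, ρ (a ⊗ b̄)⟩ ≥ 0` because `ρ` is positive semidefinite. -/

open Polynomial in
theorem exists_ne_zero_quadratic_form_eq_zero {K : Type*} [Field K] [IsAlgClosed K]
    (a b c : K) : ∃ α β : K, (α, β) ≠ 0 ∧ a * α ^ 2 + b * α * β + c * β ^ 2 = 0 := by
  by_cases ha : a = 0
  · exact ⟨1, 0, by simp, by simp [ha]⟩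
  obtain ⟨x, hx⟩ := IsAlgClosed.exists_root (C a * X ^ 2 + C b * X + C c)
    (by rw [degree_quadratic ha]; decide)
  exact ⟨x, 1, by simp, by simpa using hx⟩

theorem exists_eq_mul_of_mul_eq_mul {K : Type*} [Field K] (v : Fin 2 × Fin 2 → K)
    (h : v (0, 0) * v (1, 1) = v (0, 1) * v (1, 0)) :
    ∃ a b : Fin 2 → K, ∀ p, v p = a p.1 * b p.2 := by
  by_cases h00 : v (0, 0) = 0
  · by_cases h01 : v (0, 1) = 0
    · refine ⟨![0, 1], ![v (1, 0), v (1, 1)], ?_⟩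
      intro p; fin_cases p <;> simp_all
    · have h10 : v (1, 0) = 0 := by simpa [h00, h01] using h
      refine ⟨![v (0, 1), v (1, 1)], ![0, 1], ?_⟩
      intro p; fin_cases p <;> simp_all
  · refine ⟨![v (0, 0), v (1, 0)], ![1, v (0, 1) / v (0, 0)], ?_⟩
    intro p; fin_cases p <;> simp_all
    · field_simp
    · field_simp; linear_combination h

theorem exists_ne_zero_smul_add_smul_eq_mul {K : Type*} [Field K] [IsAlgClosed K]
    (u w : Fin 2 × Fin 2 → K) :
    ∃ α β : K, (α, β) ≠ 0 ∧ ∃ a b : Fin 2 → K, ∀ p, (α • u + β • w) p = a p.1 * b p.2 := by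
  obtain ⟨α, β, hαβ, hroot⟩ := exists_ne_zero_quadratic_form_eq_zero
    (u (0, 0) * u (1, 1) - u (0, 1) * u (1, 0))
    (u (0, 0) * w (1, 1) + w (0, 0) * u (1, 1) - u (0, 1) * w (1, 0) - w (0, 1) * u (1, 0))
    (w (0, 0) * w (1, 1) - w (0, 1) * w (1, 0))
  refine ⟨α, β, hαβ, exists_eq_mul_of_mul_eq_mul _ ?_⟩
  simp only [Pi.add_apply, Pi.smul_apply, smul_eq_mul]
  linear_combination hroot

theorem star_dotProduct_partialTranspose_mulVec_mul
    (ρ : Matrix (Fin 2 × Fin 2) (Fin 2 × Fin 2) ℂ) (a b : Fin 2 → ℂ) :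
    star (fun p : Fin 2 × Fin 2 => a p.1 * b p.2) ⬝ᵥ
        (partialTranspose ρ *ᵥ fun p => a p.1 * b p.2) =
      star (fun p : Fin 2 × Fin 2 => a p.1 * star (b p.2)) ⬝ᵥ
        (ρ *ᵥ fun p => a p.1 * star (b p.2)) := by
  simp only [dotProduct, mulVec, partialTranspose, Pi.star_apply, star_mul', star_star,
    Fintype.sum_prod_type, Fin.sum_univ_two]
  ring

theorem Matrix.PosSemidef.star_dotProduct_partialTranspose_mulVec_mul_nonneg
    {ρ : Matrix (Fin 2 × Fin 2) (Fin 2 × Fin 2) ℂ} (hρ : ρ.PosSemidef) (a b : Fin 2 → ℂ) :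
    0 ≤ star (fun p : Fin 2 × Fin 2 => a p.1 * b p.2) ⬝ᵥ
        (partialTranspose ρ *ᵥ fun p => a p.1 * b p.2) := by
  rw [star_dotProduct_partialTranspose_mulVec_mul]
  exact hρ.dotProduct_mulVec_nonneg _

theorem Matrix.IsHermitian.star_dotProduct_mulVec_smul_eigenvectorBasis_add
    {𝕜 n : Type*} [RCLike 𝕜] [Fintype n] [DecidableEq n] {A : Matrix n n 𝕜}
    (hA : A.IsHermitian) {i j : n} (hij : i ≠ j) (α β : 𝕜) :
    star (α • ⇑(hA.eigenvectorBasis i) + β • ⇑(hA.eigenvectorBasis j)) ⬝ᵥ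
        (A *ᵥ (α • ⇑(hA.eigenvectorBasis i) + β • ⇑(hA.eigenvectorBasis j))) =
      ((‖α‖ ^ 2 * hA.eigenvalues i + ‖β‖ ^ 2 * hA.eigenvalues j : ℝ) : 𝕜) := by
  have hinner : ∀ k l, star ⇑(hA.eigenvectorBasis k) ⬝ᵥ ⇑(hA.eigenvectorBasis l) =
      if k = l then 1 else 0 := fun k l => by
    rw [dotProduct_comm, ← EuclideanSpace.inner_eq_star_dotProduct]
    exact orthonormal_iff_ite.mp hA.eigenvectorBasis.orthonormal k l
  simp only [mulVec_add, mulVec_smul, mulVec_eigenvectorBasis, star_add, star_smul,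
    add_dotProduct, dotProduct_add, smul_dotProduct, dotProduct_smul, hinner, hij, hij.symm,
    if_true, if_false, RCLike.real_smul_eq_coe_smul (K := 𝕜), smul_eq_mul]
  push_cast
  rw [← RCLike.conj_mul, ← RCLike.conj_mul]
  simp only [RCLike.star_def]
  ring

theorem stmt_15 (ρ : Matrix (Fin 2 × Fin 2) (Fin 2 × Fin 2) ℂ)
    (hρ : IsTwoQubitDensityMatrix ρ)
    (hH : (partialTranspose ρ).IsHermitian) :
    (Finset.univ.filter fun i : Fin 2 × Fin 2 => hH.eigenvalues i < 0).card ≤ 1 := by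
  by_contra! hcard
  obtain ⟨i, hi, j, hj, hij⟩ := Finset.one_lt_card.mp hcard
  simp only [Finset.mem_filter, Finset.mem_univ, true_and] at hi hj
  obtain ⟨α, β, hαβ, a, b, hab⟩ :=
    exists_ne_zero_smul_add_smul_eq_mul ⇑(hH.eigenvectorBasis i) ⇑(hH.eigenvectorBasis j)
  have hnonneg := hρ.1.star_dotProduct_partialTranspose_mulVec_mul_nonneg a b
  rw [← funext hab, hH.star_dotProduct_mulVec_smul_eigenvectorBasis_add hij,
    RCLike.ofReal_nonneg] at hnonneg
  have hα := sq_nonneg ‖α‖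
  have hβ := sq_nonneg ‖β‖
  rcases not_and_or.mp (Prod.mk_eq_zero.not.mp hαβ) with hα0 | hβ0
  · have := pow_pos (norm_pos_iff.mpr hα0) 2
    nlinarith
  · have := pow_pos (norm_pos_iff.mpr hβ0) 2
    nlinarith
end
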